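/- arXiv:2401.13788 — 2 statements merged into one kernel-verified Lean document; each statement's English description precedes it below -/
import Mathlib

section
/- A monomial ideal I is stable if and only if its minimal monomial generating set is a Pommaret basis for I. -/
/-- The class of an exponent vector: the least index with nonzero exponent. -/
noncomputable def cls {n : ℕ} (μ : Fin n → ℕ) : ℕ := sInf {i : ℕ | ∃ hi : i < n, μ ⟨i, hi⟩ ≠ 0}

/-- Pommaret involutive divisibility: `μ` divides `ν` and the quotient only
involves the multiplicative variables `x_1, …, x_{cls μ}` of `μ`. -/
def InvDvd {n : ℕ} (μ ν : Fin n → ℕ) : Prop :=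
  (∀ i, μ i ≤ ν i) ∧ ∀ i : Fin n, cls μ < (i : ℕ) → ν i = μ i

/-- Membership of a monomial in the monomial ideal generated by `H`. -/
def MemMonIdeal {n : ℕ} (H : Set (Fin n → ℕ)) (ν : Fin n → ℕ) : Prop :=
  ∃ h ∈ H, ∀ i, h i ≤ ν i

/-- A set of exponent vectors is (the set of monomials of) a monomial ideal if
it is closed under taking monomial multiples. -/
def IsMonIdeal {n : ℕ} (S : Set (Fin n → ℕ)) : Prop :=
  ∀ μ ∈ S, ∀ ν : Fin n → ℕ, (∀ i, μ i ≤ ν i) → ν ∈ S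

/-- The elementary move of stability: replace x^μ by x^μ · x_i / x_{cls μ}. -/
noncomputable def bump {n : ℕ} (μ : Fin n → ℕ) (i : Fin n) : Fin n → ℕ :=
  fun j => if (j : ℕ) = cls μ then μ j - 1 else if j = i then μ j + 1 else μ j

/-- A monomial ideal is stable if for every monomial x^μ in it and every index
i greater than the class of μ, the monomial x^μ · x_i / x_{cls μ} is in it. -/
def IsStable {n : ℕ} (S : Set (Fin n → ℕ)) : Prop :=
  ∀ μ ∈ S, ∀ i : Fin n, cls μ < (i : ℕ) → bump μ i ∈ S

/-- The minimal monomial generating set: monomials of S not properly divisible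
by another monomial of S. -/
def MinGen {n : ℕ} (S : Set (Fin n → ℕ)) : Set (Fin n → ℕ) :=
  {g | g ∈ S ∧ ∀ ν ∈ S, (∀ i, ν i ≤ g i) → ν = g}

/-- A monomial ideal is quasi-stable if it possesses a finite Pommaret basis:
a finite generating set H such that every monomial of the ideal has exactly
one involutive divisor in H. -/
def IsQuasiStable {n : ℕ} (S : Set (Fin n → ℕ)) : Prop :=
  ∃ H : Finset (Fin n → ℕ), (∀ ν, ν ∈ S ↔ MemMonIdeal ↑H ν) ∧
    ∀ ν ∈ S, ∃! h, h ∈ H ∧ InvDvd h ν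

/-!
Two involutive divisors of the same monomial are comparable: they agree above the larger of their
classes and the one of larger class vanishes below it. Hence minimality of the generators makes the
Pommaret divisor unique. For existence in a stable ideal, divide a monomial that is not a minimal
generator by its smallest variable: stability keeps the quotient in the ideal, and since classes
only grow along divisors, an involutive divisor of the quotient involutively divides the monomial.
Conversely, if `x^μ ∈ I` and `i > cls μ`, the involutive divisor of `x^μ x_i` among the minimal
generators cannot be `x^μ` itself, so its exponent of `x_{cls μ}` is smaller than that of `x^μ`
and it divides `x^μ x_i / x_{cls μ}`.
-/

section

variable {n : ℕ}

lemma cls_le {μ : Fin n → ℕ} {k : Fin n} (h : μ k ≠ 0) : cls μ ≤ k :=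
  Nat.sInf_le ⟨k.isLt, h⟩

lemma apply_eq_zero_of_lt_cls {μ : Fin n → ℕ} {k : Fin n} (h : (k : ℕ) < cls μ) : μ k = 0 :=
  not_not.1 fun hk => (cls_le hk).not_gt h

lemma exists_apply_cls_ne_zero {μ : Fin n → ℕ} (h : μ ≠ 0) :
    ∃ c : Fin n, (c : ℕ) = cls μ ∧ μ c ≠ 0 := by
  obtain ⟨i, hi⟩ := Function.ne_iff.mp h
  obtain ⟨hc, hμc⟩ := Nat.sInf_mem (s := {i : ℕ | ∃ hi : i < n, μ ⟨i, hi⟩ ≠ 0}) ⟨i, i.isLt, hi⟩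
  exact ⟨⟨cls μ, hc⟩, rfl, hμc⟩

lemma cls_eq_of_apply_ne_zero {μ : Fin n → ℕ} {c : Fin n} (hc : μ c ≠ 0)
    (hlt : ∀ k : Fin n, k < c → μ k = 0) : cls μ = c :=
  le_antisymm (cls_le hc) <| le_csInf ⟨c, c.isLt, hc⟩ fun i ⟨hi, hne⟩ =>
    not_lt.1 fun h => hne (hlt ⟨i, hi⟩ h)

lemma cls_le_cls_of_le {μ ν : Fin n → ℕ} (hμ : μ ≠ 0) (h : μ ≤ ν) : cls ν ≤ cls μ := by
  obtain ⟨c, hc, hμc⟩ := exists_apply_cls_ne_zero hμ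
  rw [← hc]
  exact cls_le fun h0 => hμc (Nat.eq_zero_of_le_zero (h0 ▸ h c))

lemma InvDvd.refl (μ : Fin n → ℕ) : InvDvd μ μ :=
  ⟨fun _ => le_rfl, fun _ _ => rfl⟩

lemma InvDvd.le_of_le_of_cls_le {g μ ν : Fin n → ℕ} (hg : InvDvd g ν) (hμ : μ ≤ ν)
    (hcls : cls g ≤ cls μ) (hc : ∀ k : Fin n, (k : ℕ) = cls μ → μ k ≤ g k) : μ ≤ g := by
  intro k
  rcases lt_trichotomy (k : ℕ) (cls μ) with hk | hk | hk
  · simp [apply_eq_zero_of_lt_cls hk]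
  · exact hc k hk
  · exact hg.2 k (hcls.trans_lt hk) ▸ hμ k

lemma InvDvd.le_or_le {a b ν : Fin n → ℕ} (ha : InvDvd a ν) (hb : InvDvd b ν) :
    a ≤ b ∨ b ≤ a := by
  rcases lt_trichotomy (cls a) (cls b) with h | h | h
  · exact Or.inr <| ha.le_of_le_of_cls_le hb.1 h.le fun k hk => ha.2 k (hk ▸ h) ▸ hb.1 k
  · by_cases hba : ∀ k : Fin n, (k : ℕ) = cls b → b k ≤ a k
    · exact Or.inr (ha.le_of_le_of_cls_le hb.1 h.le hba)
    · push Not at hba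
      obtain ⟨k, hk, hab⟩ := hba
      refine Or.inl (hb.le_of_le_of_cls_le ha.1 h.ge fun k' hk' => ?_)
      rw [Fin.ext (hk'.trans (h.trans hk.symm))]
      exact hab.le
  · exact Or.inl <| hb.le_of_le_of_cls_le ha.1 h.le fun k hk => hb.2 k (hk ▸ h) ▸ ha.1 k

section MinGen

variable {S : Set (Fin n → ℕ)}

lemma eq_of_mem_minGen_of_invDvd {g₁ g₂ ν : Fin n → ℕ} (h₁ : g₁ ∈ MinGen S)
    (h₂ : g₂ ∈ MinGen S) (d₁ : InvDvd g₁ ν) (d₂ : InvDvd g₂ ν) : g₁ = g₂ := by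
  rcases d₁.le_or_le d₂ with h | h
  · exact h₂.2 g₁ h₁.1 h
  · exact (h₁.2 g₂ h₂.1 h).symm

lemma IsStable.sub_single_cls_mem (hS : IsMonIdeal S) (hst : IsStable S)
    {ν : Fin n → ℕ} (hν : ν ∈ S) (hmin : ν ∉ MinGen S) {c : Fin n} (hc : (c : ℕ) = cls ν)
    (hνc : ν c ≠ 0) : ν - Pi.single c 1 ∈ S := by
  obtain ⟨μ, hμ, hμν, hne⟩ : ∃ μ ∈ S, μ ≤ ν ∧ μ ≠ ν := by
    by_contra! h
    exact hmin ⟨hν, h⟩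
  obtain ⟨j, hj⟩ : ∃ j, μ j < ν j := by
    by_contra! h
    exact hne (le_antisymm hμν h)
  have hνj : ν - Pi.single j 1 ∈ S := hS μ hμ _ fun k => by
    by_cases hk : k = j
    · subst hk
      simp only [Pi.sub_apply, Pi.single_eq_same]
      omega
    · simpa [hk] using hμν k
  rcases (hc ▸ cls_le (k := j) (by omega) : (c : ℕ) ≤ j).eq_or_lt with hcj | hcj
  · rwa [Fin.ext hcj]
  have hcls : cls (ν - Pi.single j 1) = cls ν := by
    rw [← hc]
    refine cls_eq_of_apply_ne_zero ?_ fun k hk => ?_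
    · simpa [Fin.ne_of_lt hcj] using hνc
    · simp [apply_eq_zero_of_lt_cls (μ := ν) (hc ▸ hk : (k : ℕ) < cls ν)]
  convert hst _ hνj j (hcls ▸ hc ▸ hcj) using 1
  ext k
  simp only [bump, hcls, ← hc, Fin.val_inj, Pi.sub_apply, Pi.single_apply]
  split_ifs <;> subst_vars <;> omega

lemma IsStable.exists_minGen_invDvd (hS : IsMonIdeal S) (h0 : (0 : Fin n → ℕ) ∉ S)
    (hst : IsStable S) {ν : Fin n → ℕ} (hν : ν ∈ S) : ∃ g ∈ MinGen S, InvDvd g ν := by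
  induction ν using WellFoundedLT.induction with
  | ind ν ih =>
  by_cases hmin : ν ∈ MinGen S
  · exact ⟨ν, hmin, InvDvd.refl ν⟩
  have hν0 : ν ≠ 0 := by rintro rfl; exact h0 hν
  obtain ⟨c, hc, hνc⟩ := exists_apply_cls_ne_zero hν0
  set ν' := ν - Pi.single c 1
  have hν' : ν' ∈ S := hst.sub_single_cls_mem hS hν hmin hc hνc
  have hν'ν : ν' < ν := by
    refine lt_of_le_of_ne tsub_le_self fun h => ?_
    have := congrFun h c
    simp only [ν', Pi.sub_apply, Pi.single_eq_same] at this
    omega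
  obtain ⟨g, hg, hgν'⟩ := ih ν' hν'ν hν'
  have hcg : (c : ℕ) ≤ cls g := calc
    (c : ℕ) = cls ν := hc
    _ ≤ cls ν' := cls_le_cls_of_le (fun h => h0 (h ▸ hν')) hν'ν.le
    _ ≤ cls g := cls_le_cls_of_le (fun h => h0 (h ▸ hg.1)) hgν'.1
  refine ⟨g, hg, fun k => (hgν'.1 k).trans (hν'ν.le k), fun k hk => ?_⟩
  have hkc : k ≠ c := fun h => by subst h; omega
  simpa [ν', hkc] using hgν'.2 k hk

lemma isStable_of_forall_exists_minGen_invDvd (hS : IsMonIdeal S)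
    (hPB : ∀ ν ∈ S, ∃ g ∈ MinGen S, InvDvd g ν) : IsStable S := by
  intro μ hμ i hi
  rcases eq_or_ne μ 0 with rfl | hμ0
  · exact hS 0 hμ _ fun _ => Nat.zero_le _
  obtain ⟨c, hc, hμc⟩ := exists_apply_cls_ne_zero hμ0
  have hci : c ≠ i := fun h => by subst h; omega
  set ν := μ + Pi.single i 1
  obtain ⟨g, hg, hgν⟩ := hPB ν (hS μ hμ ν fun k => by simp [ν])
  have hgν_apply : ∀ k, g k ≤ μ k + if k = i then 1 else 0 := fun k => by
    simpa [ν, Pi.single_apply] using hgν.1 k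
  have hgc : g c < μ c := by
    by_contra! hle
    have hcls : cls g ≤ cls μ := hc ▸ cls_le (by omega)
    have hμg : μ ≤ g := hgν.le_of_le_of_cls_le le_self_add hcls fun k hk =>
      Fin.ext (hk.trans hc.symm) ▸ hle
    have hgi := hgν.2 i (hcls.trans_lt hi)
    simp [ν, ← hg.2 μ hμ hμg] at hgi
  refine hS g hg.1 _ fun k => ?_
  have := hgν_apply k
  simp only [bump, ← hc, Fin.val_inj]
  split_ifs at this ⊢ <;> subst_vars <;> omega

end MinGen

end

/-- A monomial ideal is stable if and only if its minimal monomial generating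
set is a Pommaret basis for it. -/
theorem isStable_iff_minGen_pommaretBasis {n : ℕ} (S : Set (Fin n → ℕ))
    (hS : IsMonIdeal S) (h0 : (0 : Fin n → ℕ) ∉ S) :
    IsStable S ↔ ∀ ν ∈ S, ∃! g, g ∈ MinGen S ∧ InvDvd g ν := by
  refine ⟨fun hst ν hν => ?_, fun hPB =>
    isStable_of_forall_exists_minGen_invDvd hS fun ν hν => (hPB ν hν).exists⟩
  obtain ⟨g, hg, hgν⟩ := hst.exists_minGen_invDvd hS h0 hν
  exact ⟨g, ⟨hg, hgν⟩, fun g' hg' => eq_of_mem_minGen_of_invDvd hg'.1 hg hg'.2 hgν⟩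
end

section
/- Let H be a Pommaret basis of a quasi-stable ideal I and let b map each monomial of I to its unique involutive divisor in H. Then for every monomial m ∈ I and every variable x_k, b(x_k·m) has class at least cls(b(m)). -/
section

variable {n : ℕ}

lemma cls_le_of_ne_zero {μ : Fin n → ℕ} {i : Fin n} (h : μ i ≠ 0) : cls μ ≤ i :=
  Nat.sInf_le ⟨i.isLt, h⟩

lemma eq_zero_of_lt_cls {μ : Fin n → ℕ} {i : Fin n} (h : (i : ℕ) < cls μ) : μ i = 0 := by
  by_contra hne
  exact (cls_le_of_ne_zero hne).not_gt h

lemma lt_cls_of_forall_le_eq_zero {μ : Fin n → ℕ} {j : Fin n} {c : ℕ} (hj : μ j ≠ 0)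
    (h : ∀ i : Fin n, (i : ℕ) ≤ c → μ i = 0) : c < cls μ := by
  obtain ⟨hlt, hne⟩ : ∃ hlt : cls μ < n, μ ⟨cls μ, hlt⟩ ≠ 0 :=
    Nat.sInf_mem (s := {i : ℕ | ∃ hi : i < n, μ ⟨i, hi⟩ ≠ 0}) ⟨j, j.isLt, hj⟩
  by_contra! hle
  exact hne (h _ hle)

lemma InvDvd.mono {μ ν ν' : Fin n → ℕ} (h : InvDvd μ ν) (hle : ∀ i, ν i ≤ ν' i)
    (heq : ∀ i : Fin n, cls μ < (i : ℕ) → ν' i = ν i) : InvDvd μ ν' :=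
  ⟨fun i => (h.1 i).trans (hle i), fun i hi => (heq i hi).trans (h.2 i hi)⟩

/-- The exponent vector of `x_k · x^ν`. -/
def mulVar (ν : Fin n → ℕ) (k : Fin n) : Fin n → ℕ := fun i => if i = k then ν i + 1 else ν i

lemma le_mulVar (ν : Fin n → ℕ) (k i : Fin n) : ν i ≤ mulVar ν k i := by
  unfold mulVar
  split_ifs <;> omega

lemma mulVar_self_ne_zero (ν : Fin n → ℕ) (k : Fin n) : mulVar ν k k ≠ 0 := by
  simp [mulVar]

lemma InvDvd.mulVar {μ ν : Fin n → ℕ} {k : Fin n} (h : InvDvd μ ν) (hk : (k : ℕ) ≤ cls μ) :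
    InvDvd μ (mulVar ν k) :=
  h.mono (le_mulVar ν k) fun i hi => if_neg (by rintro rfl; omega)

def truncate (c : ℕ) (ν : Fin n → ℕ) : Fin n → ℕ := fun i => if (i : ℕ) ≤ c then 0 else ν i

lemma truncate_le (c : ℕ) (ν : Fin n → ℕ) (i : Fin n) : truncate c ν i ≤ ν i := by
  unfold truncate
  split_ifs <;> omega

lemma le_truncate {μ ν : Fin n → ℕ} {c : ℕ} (hc : c < cls μ) (hle : ∀ i, μ i ≤ ν i) (i : Fin n) :
    μ i ≤ truncate c ν i := by
  unfold truncate
  split_ifs with hi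
  · exact (eq_zero_of_lt_cls (hi.trans_lt hc)).le
  · exact hle i

lemma InvDvd.lt_cls_of_truncate {μ ν : Fin n → ℕ} {c : ℕ} {j : Fin n}
    (h : InvDvd μ (truncate c ν)) (hj : c < j) (hνj : ν j ≠ 0) : c < cls μ := by
  have hzero : ∀ i : Fin n, (i : ℕ) ≤ c → μ i = 0 := fun i hi =>
    Nat.eq_zero_of_le_zero ((h.1 i).trans_eq (if_pos hi))
  rcases lt_or_ge (cls μ) j with hlt | hge
  · have hμj : μ j = ν j := (h.2 j hlt).symm.trans (if_neg hj.not_ge)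
    exact lt_cls_of_forall_le_eq_zero (hμj ▸ hνj) hzero
  · exact hj.trans_le hge

lemma InvDvd.of_truncate {μ ν : Fin n → ℕ} {c : ℕ} (h : InvDvd μ (truncate c ν))
    (hc : c < cls μ) : InvDvd μ ν :=
  h.mono (truncate_le c ν) fun i hi => (if_neg (by omega)).symm

end

theorem cls_invDvd_mul_ge_general {n : ℕ} (H : Finset (Fin n → ℕ))
    (hPB : ∀ ν, MemMonIdeal ↑H ν → ∃! g, g ∈ H ∧ InvDvd g ν)
    (m : Fin n → ℕ) (k : Fin n)
    (g g' : Fin n → ℕ) (hg : g ∈ H) (hg' : g' ∈ H)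
    (hdm : InvDvd g m)
    (hdm' : InvDvd g' (fun i => if i = k then m i + 1 else m i)) :
    cls g ≤ cls g' := by
  change InvDvd g' (mulVar m k) at hdm'
  have hg_le : ∀ i, g i ≤ mulVar m k i := fun i => (hdm.1 i).trans (le_mulVar m k i)
  have hunique := hPB _ ⟨g, hg, hg_le⟩
  rcases le_or_gt (k : ℕ) (cls g) with hk | hk
  · rw [hunique.unique ⟨hg, hdm.mulVar hk⟩ ⟨hg', hdm'⟩]
  · by_contra! hlt
    obtain ⟨h, ⟨hh, hh_dvd⟩, -⟩ :=
      hPB (truncate (cls g') (mulVar m k)) ⟨g, hg, le_truncate hlt hg_le⟩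
    have hcls : cls g' < cls h :=
      hh_dvd.lt_cls_of_truncate (hlt.trans hk) (mulVar_self_ne_zero m k)
    obtain rfl : h = g' := hunique.unique ⟨hh, hh_dvd.of_truncate hcls⟩ ⟨hg', hdm'⟩
    exact hcls.false

/-- For a Pommaret basis H, a monomial m of the ideal and any variable x_k,
the class of the unique involutive divisor of x_k · m is at least the class of
the unique involutive divisor of m. -/
theorem cls_invDvd_mul_ge {n : ℕ} (H : Finset (Fin n → ℕ))
    (hPB : ∀ ν, MemMonIdeal ↑H ν → ∃! g, g ∈ H ∧ InvDvd g ν)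
    (m : Fin n → ℕ) (hm : MemMonIdeal ↑H m) (k : Fin n)
    (g g' : Fin n → ℕ) (hg : g ∈ H) (hg' : g' ∈ H)
    (hdm : InvDvd g m)
    (hdm' : InvDvd g' (fun i => if i = k then m i + 1 else m i)) :
    cls g ≤ cls g' :=
  cls_invDvd_mul_ge_general H hPB m k g g' hg hg' hdm hdm'
end
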